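/- arXiv:1807.09116 — 2 statements merged into one kernel-verified Lean document; each statement's English description precedes it below -/
import Mathlib

section
/- For the intensity measure λ(x,y) = x^{-2} e^{-y/x} on [a,b] × ℝ₊ (0 < a ≤ b ≤ 1) and t < 1/b: ∫_a^b ∫_0^∞ (1 - e^{ty}) x^{-2} e^{-y/x} dy dx = -log((1-ta)/(1-tb)). -/
open Real MeasureTheory Set

/-! The inner integral is a difference of two exponential integrals,
`∫₀^∞ (1 - e^{ty}) e^{-y/x} dy = x - x / (1 - t x)`, so the integrand in `x` becomes
`-t / (1 - t x)`, which is the derivative of `x ↦ log (1 - t x)`. -/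

lemma integral_one_sub_exp_mul_mul_exp_mul_Ioi {s r : ℝ} (hr : r < 0) (hsr : s + r < 0) :
    ∫ y in Ioi (0 : ℝ), (1 - exp (s * y)) * exp (r * y) = -s / (r * (s + r)) := by
  have hsplit : (fun y => (1 - exp (s * y)) * exp (r * y))
      = fun y => exp (r * y) - exp ((s + r) * y) := by
    ext y
    rw [add_mul, exp_add]
    ring
  rw [hsplit, integral_sub (integrableOn_exp_mul_Ioi hr 0) (integrableOn_exp_mul_Ioi hsr 0),
    integral_exp_mul_Ioi hr, integral_exp_mul_Ioi hsr]
  simp only [mul_zero, exp_zero]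
  field_simp [hr.ne, hsr.ne]
  ring

lemma integral_one_sub_exp_mul_mul_inv_sq_mul_exp_neg_div_Ioi {x t : ℝ} (hx : 0 < x)
    (htx : t * x < 1) :
    ∫ y in Ioi (0 : ℝ), (1 - exp (t * y)) * (x ^ 2)⁻¹ * exp (-y / x) = -t / (1 - t * x) := by
  have hr : -x⁻¹ < 0 := neg_neg_of_pos (inv_pos.mpr hx)
  have hsr : t + -x⁻¹ < 0 := by
    have : t < x⁻¹ := by rwa [← one_div, lt_div_iff₀ hx]
    linarith
  have hrewrite : (fun y => (1 - exp (t * y)) * (x ^ 2)⁻¹ * exp (-y / x))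
      = fun y => (x ^ 2)⁻¹ * ((1 - exp (t * y)) * exp (-x⁻¹ * y)) := by
    ext y
    rw [neg_div, div_eq_inv_mul, neg_mul]
    ring
  have hne : 1 - t * x ≠ 0 := by linarith
  have hden : -x⁻¹ * (t + -x⁻¹) = (1 - t * x) / x ^ 2 := by field_simp; ring
  rw [hrewrite, integral_const_mul, integral_one_sub_exp_mul_mul_exp_mul_Ioi hr hsr, hden]
  field_simp

lemma hasDerivAt_log_one_sub_mul {t x : ℝ} (hx : 1 - t * x ≠ 0) :
    HasDerivAt (fun u => log (1 - t * u)) (-t / (1 - t * x)) x := by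
  have hlin : HasDerivAt (fun u => 1 - t * u) (-t) x := by
    simpa using ((hasDerivAt_id x).const_mul t).const_sub 1
  exact hlin.log hx

theorem intensity_integral_log_general (a b t : ℝ)
    (ha : 0 < a) (hab : a ≤ b) (ht : t < 1 / b) :
    ∫ x in a..b, ∫ y in Set.Ioi (0 : ℝ),
        (1 - Real.exp (t * y)) * (x ^ 2)⁻¹ * Real.exp (-y / x)
      = -Real.log ((1 - t * a) / (1 - t * b)) := by
  have htb : t * b < 1 := by rwa [lt_div_iff₀ (ha.trans_le hab)] at ht
  have hpos : ∀ x ∈ uIcc a b, 0 < 1 - t * x := by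
    intro x hx
    rw [uIcc_of_le hab] at hx
    rcases le_or_gt t 0 with ht0 | ht0
    · nlinarith [hx.1]
    · nlinarith [hx.2]
  have hinner : EqOn
      (fun x => ∫ y in Ioi (0 : ℝ), (1 - exp (t * y)) * (x ^ 2)⁻¹ * exp (-y / x))
      (fun x => -t / (1 - t * x)) (uIcc a b) := by
    intro x hx
    have hxa : a ≤ x := by rw [uIcc_of_le hab] at hx; exact hx.1
    exact integral_one_sub_exp_mul_mul_inv_sq_mul_exp_neg_div_Ioi (ha.trans_le hxa)
      (by linarith [hpos x hx])
  have hcont : ContinuousOn (fun x => -t / (1 - t * x)) (uIcc a b) :=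
    continuousOn_const.div (by fun_prop) fun x hx => (hpos x hx).ne'
  rw [intervalIntegral.integral_congr hinner,
    intervalIntegral.integral_eq_sub_of_hasDerivAt
      (fun x hx => hasDerivAt_log_one_sub_mul (hpos x hx).ne') hcont.intervalIntegrable,
    log_div (hpos a left_mem_uIcc).ne' (hpos b right_mem_uIcc).ne']
  ring

/-- For the intensity `λ(x,y) = x⁻² e^{-y/x}` on `[a,b] × ℝ₊` (with `0 < a ≤ b ≤ 1`)
and `t < 1/b`:
`∫_a^b ∫_0^∞ (1 - e^{ty}) x⁻² e^{-y/x} dy dx = -log((1-ta)/(1-tb))`. -/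
theorem intensity_integral_log (a b t : ℝ)
    (ha : 0 < a) (hab : a ≤ b) (hb : b ≤ 1) (ht : t < 1 / b) :
    ∫ x in a..b, ∫ y in Set.Ioi (0 : ℝ),
        (1 - Real.exp (t * y)) * (x ^ 2)⁻¹ * Real.exp (-y / x)
      = -Real.log ((1 - t * a) / (1 - t * b)) :=
  intensity_integral_log_general a b t ha hab ht
end

section
/- Fix an integer n ≥ 2 and R > 1. For any index 1 ≤ j ≤ n-1, the iterated integral over the simplex {R^{-1} ≤ x_1 ≤ x_2 ≤ … ≤ x_n ≤ 1} of the function 1/(x_1⋯x_{j-1} · x_{j+1}^2 · x_{j+2} ⋯ x_n) (i.e. omitting x_j from the denominator and squaring x_{j+1}) is at most (log R)^{n-1}. -/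
/-!
On the simplex the integrand is at most `F (x_j, x_{j+1}) * ∏_{i ≠ j, j+1} g (x_i)` with
`g u = 1/u` on `[R⁻¹, 1]` and `F (s, t) = 1/t²` for `R⁻¹ ≤ s ≤ t ≤ 1`: only the ordering
`x_j ≤ x_{j+1}` is kept. By Tonelli this bound integrates to `(∫∫ F) (∫ g)^(n-2)`, and
`∫ g = log R` while `∫ F (s, t) dt = 1/s - 1 ≤ g s`, so `∫∫ F ≤ log R`.
-/

open MeasureTheory Real
open scoped ENNReal

theorem Fin.prod_sdiff_pair_succAbove {M : Type*} [CommMonoid M] {n : ℕ} (f : Fin (n + 2) → M)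
    (a : Fin (n + 2)) (b : Fin (n + 1)) :
    ∏ i ∈ Finset.univ \ {a, a.succAbove b}, f i = ∏ l, f (a.succAbove (b.succAbove l)) := by
  rw [← Finset.filter_notMem_eq_sdiff, Finset.prod_filter, Fin.prod_univ_succAbove _ a,
    Fin.prod_univ_succAbove _ b]
  simp [Fin.succAbove_ne]

namespace MeasureTheory

variable {E : Type*} [MeasureSpace E] [SigmaFinite (volume : Measure E)]

theorem lintegral_comp_removeNth {n : ℕ} (a : Fin (n + 1)) {φ : E × (Fin n → E) → ℝ≥0∞}
    (hφ : Measurable φ) :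
    ∫⁻ x : Fin (n + 1) → E, φ (x a, a.removeNth x) = ∫⁻ s, ∫⁻ y, φ (s, y) := by
  rw [← lintegral_prod _ hφ.aemeasurable]
  exact (volume_preserving_piFinSuccAbove (fun _ => E) a).lintegral_comp hφ

theorem lintegral_fin_prod_eq_pow {n : ℕ} {g : E → ℝ≥0∞} (hg : Measurable g) :
    ∫⁻ z : Fin n → E, ∏ l, g (z l) = (∫⁻ t, g t) ^ n := by
  induction n with
  | zero => simp [volume_pi]
  | succ n ih =>
    calc ∫⁻ z : Fin (n + 1) → E, ∏ l, g (z l)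
        = ∫⁻ s, ∫⁻ y : Fin n → E, g s * ∏ l, g (y l) := by
          simp_rw [Fin.prod_univ_succ]
          exact lintegral_comp_removeNth 0 (φ := fun p => g p.1 * ∏ l, g (p.2 l)) (by fun_prop)
      _ = (∫⁻ t, g t) ^ (n + 1) := by
          simp_rw [lintegral_const_mul _
            (by fun_prop : Measurable fun y : Fin n → E => ∏ l, g (y l)), ih,
            lintegral_mul_const _ hg, pow_succ']

theorem lintegral_mul_prod_sdiff_pair {n : ℕ} {F : E × E → ℝ≥0∞} {g : E → ℝ≥0∞}
    (hF : Measurable F) (hg : Measurable g) {a b : Fin (n + 2)} (hab : a ≠ b) :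
    ∫⁻ x : Fin (n + 2) → E, F (x a, x b) * ∏ i ∈ Finset.univ \ {a, b}, g (x i)
      = (∫⁻ p, F p) * (∫⁻ t, g t) ^ n := by
  obtain ⟨b, rfl⟩ := Fin.exists_succAbove_eq hab.symm
  simp_rw [Fin.prod_sdiff_pair_succAbove]
  calc _ = ∫⁻ s, ∫⁻ y : Fin (n + 1) → E, F (s, y b) * ∏ l, g (y (b.succAbove l)) :=
        lintegral_comp_removeNth a
          (φ := fun p => F (p.1, p.2 b) * ∏ l, g (p.2 (b.succAbove l))) (by fun_prop)
    _ = ∫⁻ s, ∫⁻ t, ∫⁻ z : Fin n → E, F (s, t) * ∏ l, g (z l) := by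
        refine lintegral_congr fun s => ?_
        exact lintegral_comp_removeNth b (φ := fun p => F (s, p.1) * ∏ l, g (p.2 l)) (by fun_prop)
    _ = (∫⁻ p, F p) * (∫⁻ t, g t) ^ n := by
        simp_rw [lintegral_const_mul _ (by fun_prop : Measurable fun z : Fin n → E => ∏ l, g (z l)),
          lintegral_fin_prod_eq_pow hg]
        rw [lintegral_congr fun s => lintegral_mul_const (f := fun t => F (s, t)) _ (by fun_prop),
          lintegral_mul_const _ hF.lintegral_prod_right', Measure.volume_eq_prod,
          lintegral_prod _ hF.aemeasurable]

end MeasureTheory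

namespace SimplexIntegral

noncomputable def logDensity (R : ℝ) : ℝ → ℝ≥0∞ :=
  (Set.Icc R⁻¹ 1).indicator fun u => ENNReal.ofReal u⁻¹

noncomputable def pairDensity (R : ℝ) : ℝ × ℝ → ℝ≥0∞ :=
  {p | R⁻¹ ≤ p.1 ∧ p.1 ≤ p.2 ∧ p.2 ≤ 1}.indicator fun p => ENNReal.ofReal (p.2 ^ 2)⁻¹

@[fun_prop]
theorem measurable_logDensity (R : ℝ) : Measurable (logDensity R) :=
  Measurable.indicator (by fun_prop) measurableSet_Icc

@[fun_prop]
theorem measurable_pairDensity (R : ℝ) : Measurable (pairDensity R) :=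
  Measurable.indicator (by fun_prop) <| (measurableSet_le measurable_const measurable_fst).inter <|
    (measurableSet_le measurable_fst measurable_snd).inter
      (measurableSet_le measurable_snd measurable_const)

theorem lintegral_logDensity {R : ℝ} (hR : 1 ≤ R) :
    ∫⁻ t, logDensity R t = ENNReal.ofReal (log R) := by
  have hR0 : 0 < R⁻¹ := inv_pos.2 (by linarith)
  rw [logDensity, lintegral_indicator measurableSet_Icc, ← ofReal_integral_eq_lintegral_ofReal,
    integral_Icc_eq_integral_Ioc, ← intervalIntegral.integral_of_le (inv_le_one_of_one_le₀ hR),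
    integral_inv_of_pos hR0 one_pos, one_div, inv_inv]
  · exact (continuousOn_inv₀.mono fun t ht => (hR0.trans_le ht.1).ne').integrableOn_Icc
  · exact (ae_restrict_iff' measurableSet_Icc).2 <| ae_of_all _ fun t ht =>
      inv_nonneg.2 (hR0.le.trans ht.1)

theorem integral_inv_sq {s : ℝ} (hs : 0 < s) (hs1 : s ≤ 1) :
    ∫ t in Set.Icc s 1, (t ^ 2)⁻¹ = s⁻¹ - 1 := by
  rw [integral_Icc_eq_integral_Ioc, ← intervalIntegral.integral_of_le hs1]
  have hne : ∀ t ∈ Set.uIcc s 1, t ≠ 0 := fun t ht => ((lt_min hs one_pos).trans_le ht.1).ne'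
  have hderiv : ∀ t ∈ Set.uIcc s 1, HasDerivAt (fun t : ℝ => -t⁻¹) (t ^ 2)⁻¹ t := fun t ht => by
    simpa using (hasDerivAt_inv (hne t ht)).fun_neg
  rw [intervalIntegral.integral_eq_sub_of_hasDerivAt hderiv]
  · ring
  · exact (ContinuousOn.inv₀ (by fun_prop) fun t ht =>
      pow_ne_zero 2 (hne t ht)).intervalIntegrable

theorem lintegral_pairDensity_le {R : ℝ} (hR : 0 < R) (s : ℝ) :
    ∫⁻ t, pairDensity R (s, t) ≤ logDensity R s := by
  by_cases hs : s ∈ Set.Icc R⁻¹ 1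
  · have hs0 : 0 < s := (inv_pos.2 hR).trans_le hs.1
    have hslice : (fun t => pairDensity R (s, t))
        = (Set.Icc s 1).indicator fun t => ENNReal.ofReal (t ^ 2)⁻¹ := by
      ext t
      simp [pairDensity, Set.indicator, hs.1]
    rw [hslice, lintegral_indicator measurableSet_Icc, ← ofReal_integral_eq_lintegral_ofReal,
      integral_inv_sq hs0 hs.2, logDensity, Set.indicator_of_mem hs]
    · exact ENNReal.ofReal_le_ofReal (by linarith)
    · exact (ContinuousOn.inv₀ (by fun_prop) fun t ht =>
        pow_ne_zero 2 (hs0.trans_le ht.1).ne').integrableOn_Icc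
    · exact ae_of_all _ fun t => by positivity
  · have hslice : ∀ t, pairDensity R (s, t) = 0 := fun t =>
      Set.indicator_of_notMem (fun h => hs ⟨h.1, h.2.1.trans h.2.2⟩) _
    simp [hslice]

theorem lintegral_pairDensity_le_log {R : ℝ} (hR : 1 ≤ R) :
    ∫⁻ p, pairDensity R p ≤ ENNReal.ofReal (log R) := by
  rw [Measure.volume_eq_prod, lintegral_prod _ (measurable_pairDensity R).aemeasurable,
    ← lintegral_logDensity hR]
  exact lintegral_mono (lintegral_pairDensity_le (by linarith))

theorem ofReal_norm_inv_prod_eq {R : ℝ} (hR : 0 < R) {n : ℕ} {a b : Fin n} {x : Fin n → ℝ}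
    (hx : ∀ i, x i ∈ Set.Icc R⁻¹ 1) (hab : x a ≤ x b) :
    ENNReal.ofReal ‖((∏ i ∈ Finset.univ \ {a, b}, x i) * x b ^ 2)⁻¹‖
      = pairDensity R (x a, x b) * ∏ i ∈ Finset.univ \ {a, b}, logDensity R (x i) := by
  have hxpos : ∀ i, 0 < x i := fun i => (inv_pos.2 hR).trans_le (hx i).1
  have hpair : pairDensity R (x a, x b) = ENNReal.ofReal (x b ^ 2)⁻¹ :=
    Set.indicator_of_mem (show (x a, x b) ∈ {p : ℝ × ℝ | R⁻¹ ≤ p.1 ∧ p.1 ≤ p.2 ∧ p.2 ≤ 1} from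
      ⟨(hx a).1, hab, (hx b).2⟩) _
  have hlog : ∀ i, logDensity R (x i) = ENNReal.ofReal (x i)⁻¹ := fun i =>
    Set.indicator_of_mem (hx i) _
  rw [hpair, Finset.prod_congr rfl fun i _ => hlog i,
    ← ENNReal.ofReal_prod_of_nonneg fun i _ => (inv_nonneg.2 (hxpos i).le),
    ← ENNReal.ofReal_mul (by positivity), Real.norm_of_nonneg (inv_nonneg.2
      (mul_pos (Finset.prod_pos fun i _ => hxpos i) (pow_pos (hxpos b) 2)).le),
    mul_inv, Finset.prod_inv_distrib, mul_comm]

def simplex (R : ℝ) (n : ℕ) : Set (Fin n → ℝ) := {x | (∀ i, x i ∈ Set.Icc R⁻¹ 1) ∧ Monotone x}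

theorem setIntegral_simplex_le {R : ℝ} (hR : 1 ≤ R) {n : ℕ} {a b : Fin n} (hab : a < b) :
    ∫ x in simplex R n, ((∏ i ∈ Finset.univ \ {a, b}, x i) * x b ^ 2)⁻¹ ≤ log R ^ (n - 1) := by
  obtain ⟨m, rfl⟩ : ∃ m, n = m + 2 := ⟨n - 2, by omega⟩
  have hR0 : 0 < R := by linarith
  refine (le_norm_self _).trans <| (norm_integral_le_lintegral_norm _).trans <|
    ENNReal.toReal_le_of_le_ofReal (pow_nonneg (log_nonneg hR) _) ?_
  calc ∫⁻ x in simplex R (m + 2),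
          ENNReal.ofReal ‖((∏ i ∈ Finset.univ \ {a, b}, x i) * x b ^ 2)⁻¹‖
      ≤ ∫⁻ x in simplex R (m + 2),
          pairDensity R (x a, x b) * ∏ i ∈ Finset.univ \ {a, b}, logDensity R (x i) :=
        setLIntegral_mono (by fun_prop) fun x hx =>
          (ofReal_norm_inv_prod_eq hR0 hx.1 (hx.2 hab.le)).le
    _ ≤ ∫⁻ x : Fin (m + 2) → ℝ,
          pairDensity R (x a, x b) * ∏ i ∈ Finset.univ \ {a, b}, logDensity R (x i) :=
        setLIntegral_le_lintegral _ _
    _ = (∫⁻ p, pairDensity R p) * (∫⁻ t, logDensity R t) ^ m :=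
        lintegral_mul_prod_sdiff_pair (measurable_pairDensity R) (measurable_logDensity R) hab.ne
    _ ≤ ENNReal.ofReal (log R) * ENNReal.ofReal (log R) ^ m := by
        rw [lintegral_logDensity hR]
        gcongr
        exact lintegral_pairDensity_le_log hR
    _ = ENNReal.ofReal (log R ^ (m + 1)) := by
        rw [← pow_succ', ENNReal.ofReal_pow (log_nonneg hR)]

end SimplexIntegral

/-- For `n ≥ 2`, `R > 1` and `1 ≤ j ≤ n-1`, the integral over the simplex
`{R⁻¹ ≤ x_1 ≤ ⋯ ≤ x_n ≤ 1}` of `1/(x_1 ⋯ x_{j-1} · x_{j+1}² · x_{j+2} ⋯ x_n)`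
(the factor `x_j` omitted and `x_{j+1}` squared) is at most `(log R)^{n-1}`.
Here `x : Fin n → ℝ` lists `x_1, …, x_n` (zero-based), so `x_j` is `x ⟨j-1,_⟩`
and `x_{j+1}` is `x ⟨j,_⟩`. -/
theorem simplex_integral_bound (n : ℕ) (R : ℝ) (hR : 1 < R)
    (j : ℕ) (hj1 : 1 ≤ j) (hj2 : j ≤ n - 1) :
    ∫ x in {x : Fin n → ℝ | (∀ i, x i ∈ Set.Icc (R⁻¹) 1) ∧ Monotone x},
        ((∏ i ∈ Finset.univ \ {(⟨j - 1, by omega⟩ : Fin n), (⟨j, by omega⟩ : Fin n)},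
            x i) * (x ⟨j, by omega⟩) ^ 2)⁻¹ ∂volume
      ≤ (Real.log R) ^ (n - 1) :=
  SimplexIntegral.setIntegral_simplex_le hR.le (Fin.mk_lt_mk.2 (Nat.sub_one_lt_of_lt hj1))
end
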